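/- For every L ≥ 1, every ν ∈ (0,1], and every k = (k₁,k₂,k₃) ∈ ℤ³ with k₃ ≠ 0 and |k| ≤ L, one has |M̂₁^ν(k) − M̂₁⁰(k)| ≤ (4ν L¹⁰ + 2ν² L¹²) |k|. -/

import Mathlib

/-- Euclidean norm of a lattice point `k = (k₁, k₂, k₃) ∈ ℤ³`. -/
noncomputable def knorm (k : ℤ × ℤ × ℤ) : ℝ :=
  Real.sqrt (((k.1 : ℝ)) ^ 2 + ((k.2.1 : ℝ)) ^ 2 + ((k.2.2 : ℝ)) ^ 2)

/-- Denominator `D_ν(k) = |k|²k₃² + (k₂² + ν|k|⁴)²`. -/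
noncomputable def Dnu (ν : ℝ) (k : ℤ × ℤ × ℤ) : ℝ :=
  (knorm k) ^ 2 * ((k.2.2 : ℝ)) ^ 2 + (((k.2.1 : ℝ)) ^ 2 + ν * (knorm k) ^ 4) ^ 2

/-- First component of the magnetogeostrophic symbol. -/
noncomputable def Mhat1 (ν : ℝ) (k : ℤ × ℤ × ℤ) : ℝ :=
  ((k.2.1 : ℝ) * (k.2.2 : ℝ) * (knorm k) ^ 2
    - (k.1 : ℝ) * (k.2.2 : ℝ) * (((k.2.1 : ℝ)) ^ 2 + ν * (knorm k) ^ 4)) / Dnu ν k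

/-- Second component of the magnetogeostrophic symbol. -/
noncomputable def Mhat2 (ν : ℝ) (k : ℤ × ℤ × ℤ) : ℝ :=
  (-(k.1 : ℝ) * (k.2.2 : ℝ) * (knorm k) ^ 2
    - (k.2.1 : ℝ) * (k.2.2 : ℝ) * (((k.2.1 : ℝ)) ^ 2 + ν * (knorm k) ^ 4)) / Dnu ν k

/-- Third component of the magnetogeostrophic symbol. -/
noncomputable def Mhat3 (ν : ℝ) (k : ℤ × ℤ × ℤ) : ℝ :=
  (((k.1 : ℝ) ^ 2 + (k.2.1 : ℝ) ^ 2) * (((k.2.1 : ℝ)) ^ 2 + ν * (knorm k) ^ 4)) / Dnu ν k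

/-!
Writing `n = |k|` and `(a, b, c) = k`, the numerators satisfy `N_ν = N₀ - ν a c n⁴` and the
denominators `D_ν = D₀ + 2 ν b² n⁴ + ν² n⁸`, so the cross difference `N_ν D₀ - N₀ D_ν` carries
the factor `ν n⁴`, leaving a polynomial of size at most `4 n⁶ + 2 ν n⁸`. Both denominators are at
least `n² c² ≥ n²`, which absorbs the `n⁴` and gives `|M̂₁^ν(k) - M̂₁⁰(k)| ≤ ν (4 n⁶ + 2 ν n⁸)`;
the stated bound follows from `1 ≤ n ≤ L`.
-/

lemma abs_cross_difference_le {a b c n ν : ℝ} (ha : |a| ≤ n) (hb : |b| ≤ n) (hc : |c| ≤ n)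
    (hν : 0 ≤ ν) :
    |2 * b ^ 3 * c * n ^ 2 + a * c ^ 3 * n ^ 2 - a * b ^ 4 * c
      + ν * n ^ 4 * (b * c * n ^ 2 - a * b ^ 2 * c)| ≤ 4 * n ^ 6 + 2 * ν * n ^ 8 := by
  have hn : 0 ≤ n := (abs_nonneg a).trans ha
  calc _ ≤ 2 * |b| ^ 3 * |c| * n ^ 2 + |a| * |c| ^ 3 * n ^ 2 + |a| * |b| ^ 4 * |c|
        + ν * n ^ 4 * (|b| * |c| * n ^ 2 + |a| * |b| ^ 2 * |c|) := by
        refine (abs_add_le _ _).trans (add_le_add ((abs_sub _ _).trans (add_le_add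
          ((abs_add_le _ _).trans (le_of_eq ?_)) (le_of_eq ?_))) ?_)
        · simp only [abs_mul, abs_pow, abs_two, abs_of_nonneg hn]
        · simp only [abs_mul, abs_pow]
        · rw [abs_mul, abs_of_nonneg (by positivity : 0 ≤ ν * n ^ 4)]
          gcongr
          refine (abs_sub _ _).trans (le_of_eq ?_)
          simp only [abs_mul, abs_pow, abs_of_nonneg hn]
    _ ≤ 2 * n ^ 3 * n * n ^ 2 + n * n ^ 3 * n ^ 2 + n * n ^ 4 * n
        + ν * n ^ 4 * (n * n * n ^ 2 + n * n ^ 2 * n) := by gcongr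
    _ = 4 * n ^ 6 + 2 * ν * n ^ 8 := by ring

section LatticePoint

variable (k : ℤ × ℤ × ℤ)

lemma abs_fst_le_knorm : |(k.1 : ℝ)| ≤ knorm k :=
  Real.abs_le_sqrt (by nlinarith [sq_nonneg (k.2.1 : ℝ), sq_nonneg (k.2.2 : ℝ)])

lemma abs_snd_le_knorm : |(k.2.1 : ℝ)| ≤ knorm k :=
  Real.abs_le_sqrt (by nlinarith [sq_nonneg (k.1 : ℝ), sq_nonneg (k.2.2 : ℝ)])

lemma abs_thd_le_knorm : |(k.2.2 : ℝ)| ≤ knorm k :=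
  Real.abs_le_sqrt (by nlinarith [sq_nonneg (k.1 : ℝ), sq_nonneg (k.2.1 : ℝ)])

variable {k}

lemma one_le_thd_sq (hk3 : k.2.2 ≠ 0) : 1 ≤ (k.2.2 : ℝ) ^ 2 := by
  rw [one_le_sq_iff_one_le_abs, ← Int.cast_abs]
  exact_mod_cast Int.one_le_abs hk3

lemma one_le_knorm (hk3 : k.2.2 ≠ 0) : 1 ≤ knorm k :=
  Real.one_le_sqrt.mpr (by nlinarith [one_le_thd_sq hk3, sq_nonneg (k.1 : ℝ), sq_nonneg (k.2.1 : ℝ)])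

lemma knorm_sq_le_Dnu (ν : ℝ) (hk3 : k.2.2 ≠ 0) : knorm k ^ 2 ≤ Dnu ν k :=
  calc knorm k ^ 2 ≤ knorm k ^ 2 * (k.2.2 : ℝ) ^ 2 :=
        le_mul_of_one_le_right (sq_nonneg _) (one_le_thd_sq hk3)
    _ ≤ Dnu ν k := le_add_of_nonneg_right (sq_nonneg _)

lemma Dnu_pos (ν : ℝ) (hk3 : k.2.2 ≠ 0) : 0 < Dnu ν k :=
  (by nlinarith [one_le_knorm hk3] : (0 : ℝ) < knorm k ^ 2).trans_le (knorm_sq_le_Dnu ν hk3)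

lemma Mhat1_sub_Mhat1_zero (ν : ℝ) (hk3 : k.2.2 ≠ 0) :
    Mhat1 ν k - Mhat1 0 k =
      -(ν * knorm k ^ 4) *
        (2 * (k.2.1 : ℝ) ^ 3 * k.2.2 * knorm k ^ 2 + k.1 * (k.2.2 : ℝ) ^ 3 * knorm k ^ 2
          - k.1 * (k.2.1 : ℝ) ^ 4 * k.2.2
          + ν * knorm k ^ 4 * (k.2.1 * k.2.2 * knorm k ^ 2 - k.1 * (k.2.1 : ℝ) ^ 2 * k.2.2))
        / (Dnu ν k * Dnu 0 k) := by
  rw [Mhat1, Mhat1, div_sub_div _ _ (Dnu_pos ν hk3).ne' (Dnu_pos 0 hk3).ne']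
  congr 1
  simp only [Dnu]
  ring

lemma abs_Mhat1_sub_Mhat1_zero_le {ν : ℝ} (hν : 0 ≤ ν) (hk3 : k.2.2 ≠ 0) :
    |Mhat1 ν k - Mhat1 0 k| ≤ ν * (4 * knorm k ^ 6 + 2 * ν * knorm k ^ 8) := by
  have hDD : knorm k ^ 4 ≤ Dnu ν k * Dnu 0 k := by
    rw [show knorm k ^ 4 = knorm k ^ 2 * knorm k ^ 2 by ring]
    exact mul_le_mul (knorm_sq_le_Dnu ν hk3) (knorm_sq_le_Dnu 0 hk3) (sq_nonneg _)
      (Dnu_pos ν hk3).le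
  have hD : 0 < Dnu ν k * Dnu 0 k := mul_pos (Dnu_pos ν hk3) (Dnu_pos 0 hk3)
  have hE := abs_cross_difference_le (abs_fst_le_knorm k) (abs_snd_le_knorm k)
    (abs_thd_le_knorm k) hν
  rw [Mhat1_sub_Mhat1_zero ν hk3, abs_div, abs_mul, abs_neg,
    abs_of_nonneg (by positivity : 0 ≤ ν * knorm k ^ 4),
    abs_of_pos hD, div_le_iff₀ hD]
  calc _ ≤ ν * knorm k ^ 4 * (4 * knorm k ^ 6 + 2 * ν * knorm k ^ 8) := by gcongr
    _ = ν * (4 * knorm k ^ 6 + 2 * ν * knorm k ^ 8) * knorm k ^ 4 := by ring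
    _ ≤ _ := by gcongr

end LatticePoint

theorem stmt10_general (L : ℝ) (ν : ℝ) (hν : ν ∈ Set.Ioc (0 : ℝ) 1)
    (k : ℤ × ℤ × ℤ) (hk3 : k.2.2 ≠ 0) (hkL : knorm k ≤ L) :
    |Mhat1 ν k - Mhat1 0 k| ≤ (4 * ν * L ^ 10 + 2 * ν ^ 2 * L ^ 12) * knorm k := by
  have hν0 : 0 ≤ ν := hν.1.le
  have hn : 1 ≤ knorm k := one_le_knorm hk3
  have hL : 0 ≤ L := zero_le_one.trans (hn.trans hkL)
  have hpow {m p : ℕ} (hmp : m ≤ p) : knorm k ^ m ≤ L ^ p * knorm k :=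
    calc knorm k ^ m ≤ knorm k ^ p := pow_le_pow_right₀ hn hmp
      _ ≤ L ^ p := pow_le_pow_left₀ (zero_le_one.trans hn) hkL p
      _ ≤ L ^ p * knorm k := le_mul_of_one_le_right (by positivity) hn
  calc |Mhat1 ν k - Mhat1 0 k| ≤ ν * (4 * knorm k ^ 6 + 2 * ν * knorm k ^ 8) :=
        abs_Mhat1_sub_Mhat1_zero_le hν0 hk3
    _ ≤ _ := by
        linear_combination (4 * ν) * hpow (m := 6) (p := 10) (by norm_num)
          + (2 * ν ^ 2) * hpow (m := 8) (p := 12) (by norm_num)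

theorem stmt10 (L : ℝ) (hL : 1 ≤ L) (ν : ℝ) (hν : ν ∈ Set.Ioc (0 : ℝ) 1)
    (k : ℤ × ℤ × ℤ) (hk3 : k.2.2 ≠ 0) (hkL : knorm k ≤ L) :
    |Mhat1 ν k - Mhat1 0 k| ≤ (4 * ν * L ^ 10 + 2 * ν ^ 2 * L ^ 12) * knorm k :=
  stmt10_general L ν hν k hk3 hkL
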